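/- arXiv:2102.06855 — 3 statements merged into one kernel-verified Lean document; each statement's English description precedes it below -/
import Mathlib

section
/- For every positive integer n and every integer k with 0 ≤ k ≤ n, the quantity (1/4^n)·C(n,k)·C(2n,n)/C(2n,2k) satisfies (1/4^n)·C(n,k)·C(2n,n)/C(2n,2k) ≤ √(8/π²) · 2^{-n·h(k/n)} / √n, where h(p) = -p·log₂ p - (1-p)·log₂(1-p) is the binary entropy function (with the convention 0·log₂0 = 0). -/
/-!
Write `n = k + j`. By the factorial form of the binomials, the left-hand side is the
Krichevsky–Trofimov probability `(2k)! (2j)! / (4ⁿ k! j! n!)`, while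
`2^(-n h(k/n)) = (k/n)^k (j/n)^j`.
The Stirling sequence `m! / (√(2m) (m/e)^m)` decreases and tends to `√π`. Comparing its terms at
`m` and `2m` gives `(2m)! ≤ √2 · 4^m (m/e)^m m!`, and its limit gives `n! ≥ √(2πn) (n/e)ⁿ`. Hence
the probability is at most `√(2/π) (k/n)^k (j/n)^j / √n`, and `√(2/π) ≤ √8 / π` as `π ≤ 4`.
-/

open Real

/-- Binary entropy in bits. -/
noncomputable def binEnt (p : ℝ) : ℝ := -(p * Real.logb 2 p) - (1 - p) * Real.logb 2 (1 - p)

open Nat Stirling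

theorem stirlingSeq_two_mul_le {m : ℕ} (hm : m ≠ 0) : stirlingSeq (2 * m) ≤ stirlingSeq m := by
  obtain ⟨m, rfl⟩ := Nat.exists_eq_succ_of_ne_zero hm
  exact stirlingSeq'_antitone (show m ≤ 2 * m + 1 by omega)

theorem factorial_two_mul_le (m : ℕ) :
    ((2 * m)! : ℝ) ≤ √2 * 4 ^ m * (m / exp 1) ^ m * m ! := by
  rcases eq_or_ne m 0 with rfl | hm
  · simp [one_le_sqrt]
  have hpos : 0 < √(2 * m : ℝ) * (m / exp 1) ^ m := by positivity
  have hdenom : √(2 * (2 * m : ℕ) : ℝ) * ((2 * m : ℕ) / exp 1) ^ (2 * m)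
      = √2 * 4 ^ m * (m / exp 1) ^ m * (√(2 * m : ℝ) * (m / exp 1) ^ m) := by
    push_cast
    rw [sqrt_mul (by norm_num), pow_mul, mul_div_assoc, mul_pow, mul_pow]
    norm_num
    ring
  have h := stirlingSeq_two_mul_le hm
  rw [stirlingSeq, stirlingSeq, hdenom, div_le_div_iff₀ (by positivity) hpos, ← mul_assoc] at h
  exact le_of_mul_le_mul_right (by linarith) hpos

noncomputable def ktProb (k j : ℕ) : ℝ :=
  ((2 * k)! * (2 * j)! : ℝ) / (k ! * j ! * (k + j)! * 4 ^ (k + j))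

theorem ktProb_eq_choose (k j : ℕ) :
    ktProb k j = (1 / 4 ^ (k + j) : ℝ) * ((k + j).choose k : ℝ) *
      ((2 * (k + j)).choose (k + j) : ℝ) / ((2 * (k + j)).choose (2 * k) : ℝ) := by
  rw [Nat.cast_choose ℝ (Nat.le_add_right k j), Nat.cast_choose ℝ (by omega : k + j ≤ 2 * (k + j)),
    Nat.cast_choose ℝ (by omega : 2 * k ≤ 2 * (k + j)), Nat.add_sub_cancel_left,
    show 2 * (k + j) - (k + j) = k + j by omega, show 2 * (k + j) - 2 * k = 2 * j by omega, ktProb]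
  field_simp

theorem ktProb_le {k j n : ℕ} (h : k + j = n) (hn : n ≠ 0) :
    ktProb k j ≤ √(2 / π) * (((k : ℝ) / n) ^ k * ((j : ℝ) / n) ^ j / √n) := by
  subst h
  calc ktProb k j
      ≤ (√2 * 4 ^ k * (k / exp 1) ^ k * k !) * (√2 * 4 ^ j * (j / exp 1) ^ j * j !) /
          (k ! * j ! * (k + j)! * 4 ^ (k + j)) := by
        unfold ktProb; gcongr <;> exact factorial_two_mul_le _
    _ = 2 * ((k / exp 1) ^ k * (j / exp 1) ^ j) / (k + j)! := by
        rw [pow_add]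
        field_simp
        norm_num
    _ ≤ 2 * ((k / exp 1) ^ k * (j / exp 1) ^ j) /
          (√(2 * π * (k + j : ℕ)) * ((k + j : ℕ) / exp 1) ^ (k + j)) := by
        gcongr
        exact le_factorial_stirling _
    _ = √(2 / π) * (((k : ℝ) / (k + j : ℕ)) ^ k * ((j : ℝ) / (k + j : ℕ)) ^ j / √(k + j : ℕ)) := by
        rw [sqrt_mul (by positivity), sqrt_mul (by norm_num), sqrt_div (by norm_num), pow_add]
        simp only [div_pow]
        field_simp
        norm_num

theorem two_rpow_mul_logb_div {k n : ℕ} (hn : n ≠ 0) :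
    (2 : ℝ) ^ ((k : ℝ) * logb 2 (k / n)) = ((k : ℝ) / n) ^ k := by
  rcases eq_or_ne k 0 with rfl | hk
  · simp
  rw [mul_comm, rpow_mul (by norm_num), rpow_logb (by norm_num) (by norm_num) (by positivity),
    rpow_natCast]

theorem two_rpow_neg_mul_binEnt {k j n : ℕ} (h : k + j = n) (hn : n ≠ 0) :
    (2 : ℝ) ^ (-(n : ℝ) * binEnt (k / n)) = ((k : ℝ) / n) ^ k * ((j : ℝ) / n) ^ j := by
  subst h
  have hn' : (k : ℝ) + j ≠ 0 := by exact_mod_cast hn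
  have hexp : -((k + j : ℕ) : ℝ) * binEnt (k / (k + j : ℕ)) =
      k * logb 2 (k / (k + j : ℕ)) + j * logb 2 (j / (k + j : ℕ)) := by
    have hj : 1 - (k : ℝ) / (k + j : ℕ) = j / (k + j : ℕ) := by
      push_cast; field_simp; ring
    rw [binEnt, hj]; push_cast; field_simp; ring
  rw [hexp, rpow_add (by norm_num), two_rpow_mul_logb_div hn, two_rpow_mul_logb_div hn]

theorem sqrt_two_div_pi_le : √(2 / π) ≤ √(8 / π ^ 2) := by
  apply Real.sqrt_le_sqrt
  rw [div_le_div_iff₀ pi_pos (by positivity)]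
  nlinarith [pi_pos, pi_le_four]

theorem kt_prob_bound (n k : ℕ) (hn : 0 < n) (hk : k ≤ n) :
    (1 / 4 ^ n : ℝ) * (Nat.choose n k : ℝ) * (Nat.choose (2 * n) n : ℝ) /
        (Nat.choose (2 * n) (2 * k) : ℝ) ≤
      Real.sqrt (8 / Real.pi ^ 2) *
        ((2 : ℝ) ^ (-(n : ℝ) * binEnt ((k : ℝ) / n)) / Real.sqrt n) := by
  obtain ⟨j, rfl⟩ := Nat.exists_eq_add_of_le hk
  rw [← ktProb_eq_choose, two_rpow_neg_mul_binEnt rfl hn.ne']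
  exact (ktProb_le rfl hn.ne').trans (mul_le_mul_of_nonneg_right sqrt_two_div_pi_le (by positivity))
end

section
/- For every positive integer d, (1/B(d/2,d/2))·(1/4)^{d/2-1} ≤ 2√d, where B is the beta function. -/
/-!
With `x = d / 2`, Legendre's duplication formula `Γ(x) Γ(x + 1/2) = 2^(1-2x) √π Γ(2x)` turns the
left-hand side into `2 Γ(x + 1/2) / (√π Γ(x))`. Log-convexity of `Γ` between `x` and `x + 1`
gives Wendel's bound `Γ(x + 1/2) ≤ √x Γ(x)`, so the left-hand side is at most `2 √(x / π) ≤ 2 √d`.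
-/

open Real

namespace Real

theorem Gamma_add_half_le_sqrt_mul_Gamma {x : ℝ} (hx : 0 < x) :
    Gamma (x + 1 / 2) ≤ √x * Gamma x := by
  have hconv := Gamma_mul_add_mul_le_rpow_Gamma_mul_rpow_Gamma hx (by positivity : 0 < x + 1)
    one_half_pos one_half_pos (add_halves 1)
  have hG : 0 ≤ Gamma x := (Gamma_pos_of_pos hx).le
  calc Gamma (x + 1 / 2) = Gamma (1 / 2 * x + 1 / 2 * (x + 1)) := by ring_nf
    _ ≤ Gamma x ^ (1 / 2 : ℝ) * Gamma (x + 1) ^ (1 / 2 : ℝ) := hconv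
    _ = √x * Gamma x := by
      rw [Gamma_add_one hx.ne', mul_rpow hx.le hG, ← sqrt_eq_rpow, ← sqrt_eq_rpow,
        mul_left_comm, mul_self_sqrt hG]

theorem inv_beta_mul_quarter_rpow_eq {x : ℝ} (hx : 0 < x) :
    1 / (Gamma x ^ 2 / Gamma (2 * x)) * (1 / 4 : ℝ) ^ (x - 1) =
      2 * Gamma (x + 1 / 2) / (√π * Gamma x) := by
  have hquarter : (1 / 4 : ℝ) ^ (x - 1) = 2 * 2 ^ (1 - 2 * x) := by
    rw [show (1 / 4 : ℝ) = 2 ^ (-2 : ℝ) by norm_num, ← rpow_mul zero_le_two,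
      show -2 * (x - 1) = 1 + (1 - 2 * x) by ring, rpow_add two_pos, rpow_one]
  have hGx : Gamma x ≠ 0 := (Gamma_pos_of_pos hx).ne'
  have hduplication := Gamma_mul_Gamma_add_half x
  -- stops `field_simp` from rewriting the argument `x + 1 / 2` in only one of the two places
  generalize Gamma (x + 1 / 2) = G at hduplication ⊢
  rw [hquarter]
  field_simp
  linear_combination -hduplication

theorem inv_beta_mul_quarter_rpow_le {x : ℝ} (hx : 0 < x) :
    1 / (Gamma x ^ 2 / Gamma (2 * x)) * (1 / 4 : ℝ) ^ (x - 1) ≤ 2 * √(x / π) := by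
  have hGx : 0 < Gamma x := Gamma_pos_of_pos hx
  have hπ : 0 < √π := sqrt_pos.mpr pi_pos
  rw [inv_beta_mul_quarter_rpow_eq hx, div_le_iff₀ (by positivity), sqrt_div' _ pi_pos.le]
  calc 2 * Gamma (x + 1 / 2) ≤ 2 * (√x * Gamma x) := by
        gcongr; exact Gamma_add_half_le_sqrt_mul_Gamma hx
    _ = 2 * (√x / √π) * (√π * Gamma x) := by field_simp

end Real

theorem beta_function_bound (d : ℕ) (hd : 0 < d) :
    (1 / (Real.Gamma ((d : ℝ) / 2) ^ 2 / Real.Gamma d)) * ((1 : ℝ) / 4) ^ ((d : ℝ) / 2 - 1) ≤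
      2 * Real.sqrt d := by
  have hx : (0 : ℝ) < d / 2 := by positivity
  have hbound := inv_beta_mul_quarter_rpow_le hx
  rw [mul_div_cancel₀ _ two_ne_zero] at hbound
  refine hbound.trans (mul_le_mul_of_nonneg_left (sqrt_le_sqrt ?_) zero_le_two)
  rw [div_div, div_le_iff₀ (by positivity)]
  nlinarith [pi_gt_three, (Nat.cast_nonneg d : (0 : ℝ) ≤ d)]
end

section
/- Let K | N ~ Binomial(N, θ) for θ ∈ [0,1] and a nonnegative integer N. Then P(|(K + 1/2)/(N+1) - θ| > 1/8) ≤ 2√e · e^{-N/32}. -/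
open Real ProbabilityTheory MeasureTheory Finset

/-! Chernoff's method with the fixed exponents `t = ±1/2`: by Hoeffding's lemma a Bernoulli(θ)
variable satisfies `E exp (t (X - θ)) ≤ exp (t² / 8)`, so the binomial moment generating function
of `K - Nθ` is at most `exp (N t² / 8)`. A deviation `|(K + 1/2)/(N + 1) - θ| > 1/8` forces
`±(K - Nθ) ≥ (N - 3)/8`, and Markov's inequality for `exp (±(K - Nθ)/2)` bounds each tail by
`exp (3/16 - N/32)`, with `exp (3/16) ≤ √e`. -/

theorem one_sub_add_mul_exp_le_exp {θ : ℝ} (hθ : θ ∈ Set.Icc (0:ℝ) 1) (t : ℝ) :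
    1 - θ + θ * exp t ≤ exp (θ * t + t ^ 2 / 8) := by
  let X : Bool → ℝ := fun b => if b then 1 else 0
  have hX : ∀ᵐ b ∂Ber(true, false, ⟨θ, hθ⟩), X b ∈ Set.Icc (0:ℝ) 1 :=
    ae_of_all _ fun b => by cases b <;> simp [X]
  have hoeffding := (hasSubgaussianMGF_of_mem_Icc (by fun_prop) hX).mgf_le t
  norm_num [mgf, integral_bernoulliMeasure, X] at hoeffding
  have h₁ : exp (θ * t) * exp (t * (1 - θ)) = exp t := by rw [← exp_add]; ring_nf
  have h₂ : exp (θ * t) * exp (-(t * θ)) = 1 := by rw [← exp_add]; ring_nf; exact exp_zero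
  calc 1 - θ + θ * exp t
      = exp (θ * t) * (θ * exp (t * (1 - θ)) + (1 - θ) * exp (-(t * θ))) := by
        linear_combination (-θ) * h₁ - (1 - θ) * h₂
    _ ≤ exp (θ * t) * exp (t ^ 2 / 8) := by
        gcongr
        exact hoeffding.trans_eq (by ring_nf)
    _ = exp (θ * t + t ^ 2 / 8) := (exp_add _ _).symm

theorem sum_choose_mul_exp_mul (N : ℕ) (θ t : ℝ) :
    ∑ k ∈ range (N + 1), (N.choose k : ℝ) * θ ^ k * (1 - θ) ^ (N - k) * exp (t * k) =
      (1 - θ + θ * exp t) ^ N := by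
  rw [add_comm (1 - θ), add_pow]
  refine sum_congr rfl fun k _ => ?_
  rw [mul_comm t, exp_nat_mul, mul_pow]
  ring

theorem sum_ite_le_exp_neg_mul_sum {ι : Type*} (s : Finset ι) {w : ι → ℝ}
    (hw : ∀ i ∈ s, 0 ≤ w i) (f : ι → ℝ) (a : ℝ) :
    ∑ i ∈ s, (if a ≤ f i then w i else 0) ≤ exp (-a) * ∑ i ∈ s, w i * exp (f i) := by
  rw [mul_sum]
  refine sum_le_sum fun i hi => ?_
  have hexp : exp (-a) * (w i * exp (f i)) = w i * exp (f i - a) := by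
    rw [sub_eq_neg_add, exp_add]; ring
  split_ifs with h
  · rw [hexp]
    exact le_mul_of_one_le_right (hw i hi) (one_le_exp (by linarith))
  · exact mul_nonneg (exp_pos _).le (mul_nonneg (hw i hi) (exp_pos _).le)

theorem sum_binomial_mul_exp_le (N : ℕ) {θ : ℝ} (hθ : θ ∈ Set.Icc (0:ℝ) 1) (t : ℝ) :
    ∑ k ∈ range (N + 1), (N.choose k : ℝ) * θ ^ k * (1 - θ) ^ (N - k) * exp (t * (k - N * θ)) ≤
      exp (N * t ^ 2 / 8) := by
  calc _ = exp (-(t * (N * θ))) * (1 - θ + θ * exp t) ^ N := by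
        rw [← sum_choose_mul_exp_mul, mul_sum]
        refine sum_congr rfl fun k _ => ?_
        rw [mul_sub, exp_sub, exp_neg]; ring
    _ ≤ exp (-(t * (N * θ))) * exp (θ * t + t ^ 2 / 8) ^ N := by
        have := one_sub_add_mul_exp_le_exp hθ t
        gcongr
        nlinarith [exp_pos t, hθ.1, hθ.2]
    _ = exp (N * t ^ 2 / 8) := by
        rw [← exp_nat_mul, ← exp_add]; ring_nf

theorem sum_binomial_ite_le (N : ℕ) {θ : ℝ} (hθ : θ ∈ Set.Icc (0:ℝ) 1) (t a : ℝ) :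
    ∑ k ∈ range (N + 1),
        (if a ≤ t * (k - N * θ) then (N.choose k : ℝ) * θ ^ k * (1 - θ) ^ (N - k) else 0) ≤
      exp (-a + N * t ^ 2 / 8) := by
  calc _ ≤ exp (-a) * ∑ k ∈ range (N + 1),
          (N.choose k : ℝ) * θ ^ k * (1 - θ) ^ (N - k) * exp (t * (k - N * θ)) :=
        sum_ite_le_exp_neg_mul_sum _ (fun k _ => binomial_nonneg (p := ⟨θ, hθ⟩)) _ _
    _ ≤ exp (-a) * exp (N * t ^ 2 / 8) := by gcongr; exact sum_binomial_mul_exp_le N hθ t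
    _ = exp (-a + N * t ^ 2 / 8) := (exp_add _ _).symm

theorem kt_deviation_cases {n x θ : ℝ} (hn : 0 ≤ n) (hθ : θ ∈ Set.Icc (0:ℝ) 1)
    (h : 1 / 8 < |(x + 1 / 2) / (n + 1) - θ|) :
    (n - 3) / 16 ≤ 1 / 2 * (x - n * θ) ∨ (n - 3) / 16 ≤ -1 / 2 * (x - n * θ) := by
  have hn1 : 0 < n + 1 := by linarith
  rcases lt_abs.mp h with h | h
  · have := (lt_div_iff₀ hn1).mp (by linarith : θ + 1 / 8 < (x + 1 / 2) / (n + 1))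
    left; linarith [hθ.1]
  · have := (div_lt_iff₀ hn1).mp (by linarith : (x + 1 / 2) / (n + 1) < θ - 1 / 8)
    right; linarith [hθ.2]

theorem kt_estimator_concentration (N : ℕ) (θ : ℝ) (hθ : θ ∈ Set.Icc (0:ℝ) 1) :
    (∑ k ∈ Finset.range (N + 1),
        if |((k : ℝ) + 1 / 2) / ((N : ℝ) + 1) - θ| > 1 / 8 then
          (Nat.choose N k : ℝ) * θ ^ k * (1 - θ) ^ (N - k)
        else 0) ≤
      2 * Real.sqrt (Real.exp 1) * Real.exp (-(N : ℝ) / 32) := by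
  set a : ℝ := (N - 3) / 16 with ha
  have htail (t : ℝ) (ht : t ^ 2 = 1 / 4) :
      ∑ k ∈ range (N + 1),
        (if a ≤ t * (k - N * θ) then (N.choose k : ℝ) * θ ^ k * (1 - θ) ^ (N - k) else 0) ≤
      exp (3 / 16) * exp (-N / 32) := by
    refine (sum_binomial_ite_le N hθ t a).trans_eq ?_
    rw [ht, ha, ← exp_add]; ring_nf
  calc _ ≤ ∑ k ∈ range (N + 1),
          ((if a ≤ 1 / 2 * (k - N * θ) then
              (N.choose k : ℝ) * θ ^ k * (1 - θ) ^ (N - k) else 0) +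
            (if a ≤ -1 / 2 * (k - N * θ) then
              (N.choose k : ℝ) * θ ^ k * (1 - θ) ^ (N - k) else 0)) := by
        refine sum_le_sum fun k _ => ?_
        have hw : (0 : ℝ) ≤ (N.choose k : ℝ) * θ ^ k * (1 - θ) ^ (N - k) :=
          binomial_nonneg (p := ⟨θ, hθ⟩)
        split_ifs with hdev hup hlow hlow <;> try linarith
        rcases kt_deviation_cases N.cast_nonneg hθ hdev with h | h <;> contradiction
    _ ≤ exp (3 / 16) * exp (-N / 32) + exp (3 / 16) * exp (-N / 32) := by
        rw [sum_add_distrib]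
        exact add_le_add (htail _ (by norm_num)) (htail _ (by norm_num))
    _ ≤ 2 * sqrt (exp 1) * exp (-N / 32) := by
        rw [← exp_half]
        have : exp (3 / 16) ≤ exp (1 / 2) := exp_le_exp.mpr (by norm_num)
        nlinarith [exp_pos (-N / 32 : ℝ)]
end
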